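/- Cardinality of the discretized fundamental region of B_n and C_n for odd M: For every integer n ≥ 1 and every integer k ≥ 0, the number of n-tuples (s₁, s₂, …, s_n) of nonnegative integers satisfying s₁ + 2s₂ + 2s₃ + ⋯ + 2s_n ≤ 2k + 1 equals 2·binom(n+k, n). -/

import Mathlib

/-! Write `s₁ = 2q + r` with `r ∈ {0, 1}`. Since the rest of the weighted sum is even,
`s₁ + 2(s₂ + ⋯ + sₙ) ≤ 2k + 1` holds iff `q + s₂ + ⋯ + sₙ ≤ k`, whatever `r` is. So the count is
twice the number of `n`-tuples with sum at most `k`, which is `C(n + k, n)` by stars and bars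
with one slack variable. -/

def sumLeEquivSumEqOption (α : Type*) [Fintype α] (k : ℕ) :
    {s : α → ℕ // ∑ i, s i ≤ k} ≃ {t : Option α → ℕ // ∑ i, t i = k} where
  toFun s := ⟨fun o => o.elim (k - ∑ i, s.1 i) s.1, by
    rw [Fintype.sum_option]; simpa using Nat.sub_add_cancel s.2⟩
  invFun t := ⟨fun a => t.1 (some a), by
    have := t.2; rw [Fintype.sum_option] at this; show ∑ i, t.1 (some i) ≤ k; omega⟩
  left_inv s := rfl
  right_inv t := by
    have := t.2; rw [Fintype.sum_option] at this
    ext (_ | a)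
    · simp only [Option.elim_none]; omega
    · rfl

theorem card_sum_le_eq_choose (α : Type*) [Fintype α] (k : ℕ) :
    Nat.card {s : α → ℕ // ∑ i, s i ≤ k} = (Fintype.card α + k).choose k := by
  classical
  rw [Nat.card_congr ((sumLeEquivSumEqOption α k).trans (Sym.equivNatSumOfFintype _ k).symm),
    Sym.natCard_sym_eq_choose, Nat.card_eq_fintype_card, Fintype.card_option,
    Nat.add_right_comm, Nat.add_sub_cancel]

def headDivModEquiv (m : ℕ) : (Fin (m + 1) → ℕ) ≃ (Fin (m + 1) → ℕ) × Fin 2 where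
  toFun s := (Fin.cons (s 0 / 2) (Fin.tail s), Fin.ofNat 2 (s 0))
  invFun p := Fin.cons (p.1 0 * 2 + p.2) (Fin.tail p.1)
  left_inv s := by
    simp only [Fin.cons_zero, Fin.tail_cons, Fin.val_ofNat, Nat.div_add_mod', Fin.cons_self_tail]
  right_inv p := by
    have h := p.2.isLt
    refine Prod.ext ?_ (Fin.ext ?_)
    · simp only [Fin.cons_zero, Fin.tail_cons, show (p.1 0 * 2 + p.2) / 2 = p.1 0 by omega,
        Fin.cons_self_tail]
    · simp only [Fin.cons_zero, Fin.val_ofNat]; omega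

theorem head_add_two_mul_sum_tail_le_iff (m k : ℕ) (s : Fin (m + 1) → ℕ) :
    s 0 + 2 * ∑ i : Fin m, s i.succ ≤ 2 * k + 1 ↔ ∑ i, (headDivModEquiv m s).1 i ≤ k := by
  simp only [headDivModEquiv, Equiv.coe_fn_mk, Fin.sum_cons, Fin.tail]
  omega

theorem card_head_add_two_mul_sum_tail_le (m k : ℕ) :
    Nat.card {s : Fin (m + 1) → ℕ // s 0 + 2 * ∑ i : Fin m, s i.succ ≤ 2 * k + 1} =
      2 * Nat.card {t : Fin (m + 1) → ℕ // ∑ i, t i ≤ k} := by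
  rw [Nat.card_congr ((headDivModEquiv m).subtypeEquiv (q := fun p ↦ ∑ i, p.1 i ≤ k)
      (head_add_two_mul_sum_tail_le_iff m k)),
    Nat.card_congr (Equiv.prodSubtypeFstEquivSubtypeProd (β := Fin 2)
      (p := fun t : Fin (m + 1) → ℕ ↦ ∑ i, t i ≤ k)), Nat.card_prod, Nat.card_fin, mul_comm]

theorem sum_ite_mul_eq_head_add_two_mul_sum_tail (m : ℕ) (s : Fin (m + 1) → ℕ) :
    ∑ i : Fin (m + 1), (if (i : ℕ) = 0 then 1 else 2) * s i = s 0 + 2 * ∑ i : Fin m, s i.succ := by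
  simp [Fin.sum_univ_succ, Finset.mul_sum]

theorem card_FM_odd (n k : ℕ) (hn : 1 ≤ n) :
    Nat.card {s : Fin n → ℕ //
        ∑ i : Fin n, (if (i : ℕ) = 0 then 1 else 2) * s i ≤ 2 * k + 1} =
      2 * Nat.choose (n + k) n := by
  obtain ⟨m, rfl⟩ : ∃ m, n = m + 1 := ⟨n - 1, by omega⟩
  simp only [sum_ite_mul_eq_head_add_two_mul_sum_tail]
  rw [card_head_add_two_mul_sum_tail_le, card_sum_le_eq_choose, Fintype.card_fin,
    Nat.choose_symm_add]
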